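/- For every topological space X, n ∈ ℕ, and α ∈ H_n(X;ℝ), and every cycle c representing α, there exists a normalised cycle c' representing α with ‖c'‖₁ ≤ ‖c‖₁. -/

import Mathlib

open Finset

noncomputable section SingularChains

/-- The affine map `Δ^k → Δ^n` extending the vertex map `π`. -/
def affMap {k n : ℕ} (π : Fin (k + 1) → Fin (n + 1)) :
    C(stdSimplex ℝ (Fin (k + 1)), stdSimplex ℝ (Fin (n + 1))) where
  toFun x := ⟨fun i => ∑ l ∈ Finset.univ.filter (fun l => π l = i), (x : Fin (k + 1) → ℝ) l, by
    constructor
    · intro i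
      exact Finset.sum_nonneg fun l _ => x.2.1 l
    · rw [← x.2.2]
      exact Finset.sum_fiberwise _ _ _⟩
  continuous_toFun := by
    apply Continuous.subtype_mk
    exact continuous_pi fun i =>
      continuous_finset_sum _ fun l _ => (continuous_apply l).comp continuous_subtype_val

variable {X : Type} [TopologicalSpace X]

/-- Singular `n`-simplices in `X`. -/
abbrev Sing (n : ℕ) (X : Type) [TopologicalSpace X] := C(stdSimplex ℝ (Fin (n + 1)), X)

/-- Singular `n`-chains with real coefficients. -/
abbrev Chain (n : ℕ) (X : Type) [TopologicalSpace X] := Sing n X →₀ ℝ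

/-- The `j`-th face map `∂ⱼ : C_{n+1}(X;ℝ) → C_n(X;ℝ)`. -/
def face {n : ℕ} (j : Fin (n + 2)) : Chain (n + 1) X →ₗ[ℝ] Chain n X :=
  Finsupp.lmapDomain ℝ ℝ fun σ => σ.comp (affMap (Fin.succAbove j))

/-- The singular boundary operator `∂ = Σⱼ (-1)ʲ ∂ⱼ`. -/
def bdry (n : ℕ) : Chain (n + 1) X →ₗ[ℝ] Chain n X :=
  ∑ j : Fin (n + 2), ((-1 : ℝ) ^ (j : ℕ)) • face j

/-- The symmetrisation of a singular simplex. -/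
def symSimplex {n : ℕ} (σ : Sing n X) : Chain n X :=
  (((n + 1).factorial : ℝ))⁻¹ •
    ∑ π : Equiv.Perm (Fin (n + 1)),
      ((Equiv.Perm.sign π : ℤ) : ℝ) • Finsupp.single (σ.comp (affMap π)) (1 : ℝ)

/-- The symmetrisation map `sym_n : C_n(X;ℝ) → C_n(X;ℝ)`. -/
def symCh (n : ℕ) : Chain n X →ₗ[ℝ] Chain n X :=
  Finsupp.lsum ℝ fun σ => LinearMap.toSpanSingleton ℝ _ (symSimplex σ)

/-- The ℓ¹-norm of a singular chain. -/
def l1 {n : ℕ} (c : Chain n X) : ℝ := ∑ σ ∈ c.support, |c σ|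

/-- Cycles. -/
def cyc (X : Type) [TopologicalSpace X] : (n : ℕ) → Submodule ℝ (Chain n X)
  | 0 => ⊤
  | n + 1 => LinearMap.ker (bdry n)

/-- Boundaries. -/
def bdries (X : Type) [TopologicalSpace X] (n : ℕ) : Submodule ℝ (Chain n X) :=
  LinearMap.range (bdry n)

/-- A chain is normalised if all but the last face map vanish on it. -/
def IsNormalised : {n : ℕ} → Chain n X → Prop
  | 0, _ => True
  | n + 1, c => ∀ j : Fin (n + 2), j ≠ Fin.last (n + 1) → face j c = 0

/-- The cyclic permutation `τⱼ = (j j-1 ⋯ 1 0)`. -/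
def tau (n : ℕ) (j : Fin (n + 1)) : Equiv.Perm (Fin (n + 1)) := (Fin.cycleRange j)⁻¹

end SingularChains

/-!
The witness is the symmetrisation `sym c`, the signed average of `c` over all permutations of
the vertices. Being an average, it does not increase the ℓ¹-norm. Reindexing the permutations by
the cycle `τⱼ` shows `∂ⱼ (sym c) = (-1)ʲ ∂₀ (sym c)`, so `∂ (sym c) = (n + 1) ∂₀ (sym c)`; as `sym`
is a chain map, for a cycle `c` this vanishes, hence so do all faces of `sym c`. Finally `sym` and
the identity are natural operators given by model chains on the standard simplices, and a chain
homotopy between them is built on the models by coning (acyclic models), so `sym c - c` is a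
boundary.
-/

open Finsupp

lemma neg_one_pow_smul_neg_one_pow_smul {M : Type*} [AddCommGroup M] [Module ℝ M] (n : ℕ)
    (x : M) : (-1 : ℝ) ^ n • (-1 : ℝ) ^ n • x = x := by
  rw [smul_smul, ← mul_pow, neg_one_mul, neg_neg, one_pow, one_smul]

section VertexChains

variable {V W : Type*}

/-- Chains of the full simplex on the vertex set `V`, spanned by all (not necessarily injective or
monotone) tuples of vertices. For `V = Fin (m + 1)` a tuple `f` stands for the affine simplex
`affMap f` in `Δ^m`, see `realize`. -/
abbrev VChain (k : ℕ) (V : Type*) : Type _ := (Fin (k + 1) → V) →₀ ℝ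

noncomputable def vmap {k : ℕ} (g : V → W) : VChain k V →ₗ[ℝ] VChain k W :=
  lmapDomain ℝ ℝ (g ∘ ·)

noncomputable def vface {k : ℕ} (j : Fin (k + 2)) : VChain (k + 1) V →ₗ[ℝ] VChain k V :=
  lmapDomain ℝ ℝ (· ∘ Fin.succAbove j)

noncomputable def vbdry (k : ℕ) : VChain (k + 1) V →ₗ[ℝ] VChain k V :=
  ∑ j : Fin (k + 2), ((-1 : ℝ) ^ (j : ℕ)) • vface j

noncomputable def vcone {k : ℕ} (v : V) : VChain k V →ₗ[ℝ] VChain (k + 1) V :=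
  lmapDomain ℝ ℝ fun f => (Fin.cons v f : Fin (k + 2) → V)

noncomputable def vcobdry {k m : ℕ} : VChain k (Fin (m + 1)) →ₗ[ℝ] VChain k (Fin (m + 2)) :=
  ∑ j : Fin (m + 2), ((-1 : ℝ) ^ (j : ℕ)) • vmap (Fin.succAbove j)

@[simp] lemma vmap_single {k : ℕ} (g : V → W) (f : Fin (k + 1) → V) (r : ℝ) :
    vmap g (single f r) = single (g ∘ f) r :=
  mapDomain_single

@[simp] lemma vface_single {k : ℕ} (j : Fin (k + 2)) (f : Fin (k + 2) → V) (r : ℝ) :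
    vface j (single f r) = single (f ∘ Fin.succAbove j) r :=
  mapDomain_single

@[simp] lemma vcone_single {k : ℕ} (v : V) (f : Fin (k + 1) → V) (r : ℝ) :
    vcone v (single f r) = single (Fin.cons v f) r :=
  mapDomain_single

lemma vbdry_apply {k : ℕ} (z : VChain (k + 1) V) :
    vbdry k z = ∑ j : Fin (k + 2), ((-1 : ℝ) ^ (j : ℕ)) • vface j z := by
  simp [vbdry]

lemma vcobdry_apply {k m : ℕ} (z : VChain k (Fin (m + 1))) :
    vcobdry z = ∑ j : Fin (m + 2), ((-1 : ℝ) ^ (j : ℕ)) • vmap (Fin.succAbove j) z := by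
  simp [vcobdry]

lemma vmap_vmap {k : ℕ} {U : Type*} (g : W → U) (g' : V → W) (z : VChain k V) :
    vmap g (vmap g' z) = vmap (g ∘ g') z := by
  simp only [vmap, lmapDomain_apply, ← mapDomain_comp]
  rfl

lemma vmap_vface {k : ℕ} (g : V → W) (j : Fin (k + 2)) (z : VChain (k + 1) V) :
    vmap g (vface j z) = vface j (vmap g z) := by
  simp only [vmap, vface, lmapDomain_apply, ← mapDomain_comp]
  rfl

lemma vmap_vbdry {k : ℕ} (g : V → W) (z : VChain (k + 1) V) :
    vmap g (vbdry k z) = vbdry k (vmap g z) := by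
  simp [vbdry_apply, vmap_vface]

lemma vcobdry_vbdry {k m : ℕ} (z : VChain (k + 1) (Fin (m + 1))) :
    vcobdry (vbdry k z) = vbdry k (vcobdry z) := by
  simp [vcobdry_apply, vmap_vbdry]

lemma vbdry_vcone {k : ℕ} (v : V) (z : VChain (k + 1) V) :
    vbdry (k + 1) (vcone v z) = z - vcone v (vbdry k z) := by
  induction z using Finsupp.induction_linear with
  | zero => simp
  | add x y hx hy => simp only [map_add, hx, hy]; abel
  | single f r =>
    rw [vbdry_apply, Fin.sum_univ_succ, vbdry_apply, map_sum, sub_eq_add_neg,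
      ← Finset.sum_neg_distrib]
    have hface : ∀ j : Fin (k + 2), (Fin.cons v f : Fin (k + 3) → V) ∘ j.succ.succAbove =
        Fin.cons v (f ∘ j.succAbove) := fun j => by
      funext l
      cases l using Fin.cases <;> simp [Fin.succ_succAbove_succ]
    congr 1
    · simp only [Fin.val_zero, pow_zero, one_smul, vface_single, vcone_single, Fin.succAbove_zero,
        Fin.cons_comp_succ]
    · refine Finset.sum_congr rfl fun j _ => ?_
      simp only [vcone_single, vface_single, Fin.val_succ, pow_succ, map_smul, hface,
        mul_neg_one, neg_smul]

lemma vbdry_vcone_of_vbdry_eq_zero {k : ℕ} (v : V) {z : VChain (k + 1) V} (hz : vbdry k z = 0) :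
    vbdry (k + 1) (vcone v z) = z := by
  rw [vbdry_vcone, hz, map_zero, sub_zero]

lemma neg_one_pow_succAbove_add_predAbove {m : ℕ} (i : Fin (m + 2)) (j : Fin (m + 1)) :
    (-1 : ℝ) ^ ((i.succAbove j : ℕ) + (j.predAbove i : ℕ)) = -(-1) ^ ((i : ℕ) + j) := by
  have hparity : ∀ a b : ℕ, a + 1 = b ∨ b + 1 = a → (-1 : ℝ) ^ a = -(-1) ^ b := by
    rintro a b (rfl | rfl) <;> simp [pow_succ]
  apply hparity
  rcases lt_or_ge j.castSucc i with h | h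
  · rw [Fin.succAbove_of_castSucc_lt _ _ h, Fin.predAbove_of_castSucc_lt _ _ h]
    have hji : (j : ℕ) < i := h
    simp only [Fin.val_castSucc, Fin.val_pred]
    omega
  · rw [Fin.succAbove_of_le_castSucc _ _ h, Fin.predAbove_of_le_castSucc _ _ h]
    simp only [Fin.val_succ, Fin.coe_castPred]
    omega

lemma vcobdry_vcobdry {k m : ℕ} (z : VChain k (Fin (m + 1))) : vcobdry (vcobdry z) = 0 := by
  simp only [vcobdry_apply, map_sum, map_smul, Finset.smul_sum, smul_smul, ← pow_add, vmap_vmap]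
  rw [← Finset.sum_product']
  -- `δᵢ ∘ δⱼ = δ_{δᵢ j} ∘ δ_{j.predAbove i}` pairs off the terms with opposite signs
  refine Finset.sum_involution (fun p _ => (p.1.predAbove p.2, p.2.succAbove p.1)) ?_ ?_
    (fun _ _ => Finset.mem_univ _) ?_
  · rintro ⟨j, i⟩ _
    have hcomp : (i.succAbove j).succAbove ∘ (j.predAbove i).succAbove = i.succAbove ∘ j.succAbove :=
      funext (Fin.succAbove_succAbove_succAbove_predAbove i j)
    simp only [hcomp, add_comm (j.predAbove i : ℕ), neg_one_pow_succAbove_add_predAbove,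
      add_comm (j : ℕ), neg_smul, add_neg_cancel]
  · rintro ⟨j, i⟩ _ _ h
    exact Fin.succAbove_ne i j (congrArg Prod.snd h)
  · rintro ⟨j, i⟩ _
    simp [Fin.succAbove_succAbove_predAbove, Fin.predAbove_predAbove_succAbove]

end VertexChains

section Models

open Equiv

noncomputable def altPerm (m : ℕ) : VChain m (Fin (m + 1)) :=
  ∑ π : Perm (Fin (m + 1)), ((Perm.sign π : ℤ) : ℝ) • single (⇑π) 1

noncomputable def symModel (m : ℕ) : VChain m (Fin (m + 1)) :=
  ((m + 1).factorial : ℝ)⁻¹ • altPerm m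

noncomputable def idModel (m : ℕ) : VChain m (Fin (m + 1)) := single id 1

lemma sign_tau {m : ℕ} (j : Fin (m + 1)) : Perm.sign (tau m j) = (-1) ^ (j : ℕ) := by
  simp [tau, Fin.sign_cycleRange]

lemma tau_apply_zero {m : ℕ} (j : Fin (m + 1)) : tau m j 0 = j :=
  Fin.cycleRange_symm_zero j

lemma tau_comp_succ {m : ℕ} (j : Fin (m + 1)) : ⇑(tau m j) ∘ Fin.succ = j.succAbove :=
  funext (Fin.cycleRange_symm_succ j)

lemma vface_altPerm {m : ℕ} (j : Fin (m + 2)) :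
    vface j (altPerm (m + 1)) = (-1 : ℝ) ^ (j : ℕ) • vface 0 (altPerm (m + 1)) := by
  have h : vface 0 (altPerm (m + 1)) = (-1 : ℝ) ^ (j : ℕ) • vface j (altPerm (m + 1)) := by
    simp only [altPerm, map_sum, map_smul, vface_single, Finset.smul_sum, smul_smul]
    rw [← Equiv.sum_comp (Equiv.mulRight (tau (m + 1) j))]
    refine Finset.sum_congr rfl fun π _ => ?_
    have hcomp : ⇑(π * tau (m + 1) j) ∘ Fin.succAbove 0 = ⇑π ∘ j.succAbove := by
      rw [Fin.succAbove_zero, Perm.coe_mul, Function.comp_assoc, tau_comp_succ]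
    simp only [coe_mulRight, hcomp, map_mul, sign_tau]
    push_cast
    ring_nf
  rw [h, neg_one_pow_smul_neg_one_pow_smul]

lemma vface_zero_altPerm {m : ℕ} : vface 0 (altPerm (m + 1)) = vcobdry (altPerm m) := by
  let φ : Perm (Fin (m + 1)) × Fin (m + 2) → Perm (Fin (m + 2)) :=
    fun p => tau (m + 1) p.2 * Perm.decomposeFin.symm (0, p.1)
  have hφ_succ (p) : ⇑(φ p) ∘ Fin.succ = p.2.succAbove ∘ ⇑p.1 := by
    funext l
    simp [φ, Perm.decomposeFin_symm_apply_succ, ← tau_comp_succ]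
  have hφ_sign (p) : Perm.sign (φ p) = Perm.sign p.1 * (-1) ^ (p.2 : ℕ) := by
    simp [φ, sign_tau, Perm.decomposeFin.symm_sign, mul_comm]
  have hφ_inj : Function.Injective φ := by
    rintro ⟨ρ, j⟩ ⟨ρ', j'⟩ h
    obtain rfl : j = j' := by
      simpa [φ, Perm.decomposeFin_symm_apply_zero, tau_apply_zero] using congrArg (· 0) h
    simpa [φ] using Perm.decomposeFin.symm.injective (mul_left_cancel h)
  have hφ_bij : Function.Bijective φ := by
    refine (Fintype.bijective_iff_injective_and_card φ).2 ⟨hφ_inj, ?_⟩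
    simp only [Fintype.card_prod, Fintype.card_perm, Fintype.card_fin, Nat.factorial_succ (m + 1)]
    ring
  simp only [altPerm, vcobdry_apply, map_sum, map_smul, vface_single, vmap_single,
    Finset.smul_sum, smul_smul, Fin.succAbove_zero]
  rw [← Finset.sum_product', Finset.univ_product_univ]
  refine (Fintype.sum_bijective φ hφ_bij _ _ fun p => ?_).symm
  rw [hφ_succ, hφ_sign]
  push_cast
  rfl

lemma vface_symModel {m : ℕ} (j : Fin (m + 2)) :
    vface j (symModel (m + 1)) = (-1 : ℝ) ^ (j : ℕ) • vface 0 (symModel (m + 1)) := by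
  rw [symModel, map_smul, map_smul, vface_altPerm, smul_comm]

lemma vbdry_symModel (m : ℕ) : vbdry m (symModel (m + 1)) = vcobdry (symModel m) := by
  have hterm (j : Fin (m + 2)) :
      (-1 : ℝ) ^ (j : ℕ) • vface j (symModel (m + 1)) = vface 0 (symModel (m + 1)) := by
    rw [vface_symModel, neg_one_pow_smul_neg_one_pow_smul]
  have hfact : ((m + 2 : ℕ) : ℝ) * ((m + 2).factorial : ℝ)⁻¹ = ((m + 1).factorial : ℝ)⁻¹ := by
    rw [Nat.factorial_succ (m + 1), Nat.cast_mul, mul_inv, ← mul_assoc,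
      mul_inv_cancel₀ (by positivity), one_mul]
  rw [vbdry_apply, Finset.sum_congr rfl fun j _ => hterm j, Finset.sum_const, Finset.card_univ,
    Fintype.card_fin, ← Nat.cast_smul_eq_nsmul ℝ, symModel, symModel, map_smul, map_smul,
    vface_zero_altPerm, smul_smul, hfact]

lemma vbdry_idModel (m : ℕ) : vbdry m (idModel (m + 1)) = vcobdry (idModel m) := by
  simp [idModel, vbdry_apply, vcobdry_apply]

lemma symModel_zero : symModel 0 = idModel 0 := by
  simp [symModel, altPerm, idModel]

/-- The chain homotopy from `idModel` to `symModel`, built by acyclic models: in each degree the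
cycle `sym - id - H ∘ ∂` is coned off from the vertex `0`. -/
noncomputable def homotopyModel : (k : ℕ) → VChain (k + 1) (Fin (k + 1))
  | 0 => 0
  | k + 1 => vcone 0 (symModel (k + 1) - idModel (k + 1) - vcobdry (homotopyModel k))

lemma vbdry_homotopyModel : ∀ k : ℕ,
    vbdry (k + 1) (homotopyModel (k + 1)) =
      symModel (k + 1) - idModel (k + 1) - vcobdry (homotopyModel k)
  | 0 => vbdry_vcone_of_vbdry_eq_zero _ <| by
    simp [homotopyModel, vbdry_symModel, vbdry_idModel, symModel_zero]
  | k + 1 => vbdry_vcone_of_vbdry_eq_zero _ <| by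
    rw [map_sub, map_sub, vbdry_symModel, vbdry_idModel, ← vcobdry_vbdry, vbdry_homotopyModel k,
      map_sub, map_sub, vcobdry_vcobdry, sub_zero, sub_self]

end Models

lemma affMap_comp_affMap {k l n : ℕ} (f : Fin (l + 1) → Fin (n + 1))
    (g : Fin (k + 1) → Fin (l + 1)) : (affMap f).comp (affMap g) = affMap (f ∘ g) := by
  ext x i
  change ∑ l ∈ {l | f l = i}, ∑ l' ∈ {l' | g l' = l}, (x : Fin (k + 1) → ℝ) l' =
    ∑ l' ∈ {l' | f (g l') = i}, (x : Fin (k + 1) → ℝ) l'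
  rw [Finset.sum_fiberwise_eq_sum_filter]
  simp only [Finset.mem_filter, Finset.mem_univ, true_and]

lemma affMap_id {n : ℕ} : affMap (id : Fin (n + 1) → Fin (n + 1)) = ContinuousMap.id _ := by
  ext x i
  change ∑ l ∈ {l | l = i}, (x : Fin (n + 1) → ℝ) l = x i
  rw [Finset.sum_filter, Finset.sum_ite_eq', if_pos (Finset.mem_univ i)]

section Realization

variable {X : Type} [TopologicalSpace X]

noncomputable def realize {k m : ℕ} (σ : Sing m X) : VChain k (Fin (m + 1)) →ₗ[ℝ] Chain k X :=
  lmapDomain ℝ ℝ fun f => σ.comp (affMap f)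

@[simp] lemma realize_single {k m : ℕ} (σ : Sing m X) (f : Fin (k + 1) → Fin (m + 1)) (r : ℝ) :
    realize σ (single f r) = single (σ.comp (affMap f)) r :=
  mapDomain_single

lemma bdry_apply {n : ℕ} (c : Chain (n + 1) X) :
    bdry n c = ∑ j : Fin (n + 2), ((-1 : ℝ) ^ (j : ℕ)) • face j c := by
  simp [bdry]

@[simp] lemma face_single {n : ℕ} (j : Fin (n + 2)) (σ : Sing (n + 1) X) (r : ℝ) :
    face j (single σ r) = single (σ.comp (affMap (Fin.succAbove j))) r :=
  mapDomain_single

lemma face_realize {k m : ℕ} (σ : Sing m X) (j : Fin (k + 2)) (z : VChain (k + 1) (Fin (m + 1))) :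
    face j (realize σ z) = realize σ (vface j z) := by
  simp only [face, realize, vface, lmapDomain_apply, ← mapDomain_comp]
  congr 1
  funext f
  simp [ContinuousMap.comp_assoc, affMap_comp_affMap]

lemma bdry_realize {k m : ℕ} (σ : Sing m X) (z : VChain (k + 1) (Fin (m + 1))) :
    bdry k (realize σ z) = realize σ (vbdry k z) := by
  simp [bdry_apply, vbdry_apply, face_realize]

lemma realize_vmap {k m m' : ℕ} (σ : Sing m' X) (g : Fin (m + 1) → Fin (m' + 1))
    (z : VChain k (Fin (m + 1))) : realize σ (vmap g z) = realize (σ.comp (affMap g)) z := by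
  simp only [realize, vmap, lmapDomain_apply, ← mapDomain_comp]
  congr 1
  funext f
  simp [ContinuousMap.comp_assoc, affMap_comp_affMap]

lemma realize_symModel {m : ℕ} (σ : Sing m X) : realize σ (symModel m) = symSimplex σ := by
  simp [symModel, altPerm, symSimplex]

lemma realize_idModel {m : ℕ} (σ : Sing m X) : realize σ (idModel m) = single σ 1 := by
  simp [idModel, affMap_id]

noncomputable def ofModel {j n : ℕ} (M : VChain j (Fin (n + 1))) : Chain n X →ₗ[ℝ] Chain j X :=
  linearCombination ℝ fun σ => realize σ M

@[simp] lemma ofModel_single {j n : ℕ} (M : VChain j (Fin (n + 1))) (σ : Sing n X) (r : ℝ) :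
    ofModel M (single σ r) = r • realize σ M :=
  linearCombination_single _ _ _

lemma ofModel_sub {j n : ℕ} (M N : VChain j (Fin (n + 1))) (c : Chain n X) :
    ofModel (M - N) c = ofModel M c - ofModel N c := by
  induction c using Finsupp.induction_linear with
  | zero => simp
  | add c d hc hd => simp only [map_add, hc, hd]; abel
  | single σ r => simp [smul_sub]

lemma ofModel_smul {j n : ℕ} (a : ℝ) (M : VChain j (Fin (n + 1))) (c : Chain n X) :
    ofModel (a • M) c = a • ofModel M c := by
  induction c using Finsupp.induction_linear with
  | zero => simp
  | add c d hc hd => simp only [map_add, hc, hd, smul_add]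
  | single σ r => simp [smul_comm r]

lemma symCh_eq_ofModel (n : ℕ) : symCh (X := X) n = ofModel (symModel n) := by
  ext σ : 2
  simp [symCh, realize_symModel]

lemma ofModel_idModel {n : ℕ} (c : Chain n X) : ofModel (idModel n) c = c := by
  induction c using Finsupp.induction_linear with
  | zero => simp
  | add c d hc hd => simp only [map_add, hc, hd]
  | single σ r => simp [realize_idModel]

lemma face_ofModel {j n : ℕ} (i : Fin (j + 2)) (M : VChain (j + 1) (Fin (n + 1)))
    (c : Chain n X) : face i (ofModel M c) = ofModel (vface i M) c := by
  induction c using Finsupp.induction_linear with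
  | zero => simp
  | add c d hc hd => simp only [map_add, hc, hd]
  | single σ r => simp [face_realize]

lemma bdry_ofModel {j n : ℕ} (M : VChain (j + 1) (Fin (n + 1))) (c : Chain n X) :
    bdry j (ofModel M c) = ofModel (vbdry j M) c := by
  induction c using Finsupp.induction_linear with
  | zero => simp
  | add c d hc hd => simp only [map_add, hc, hd]
  | single σ r => simp [bdry_realize]

lemma ofModel_vcobdry {j n : ℕ} (M : VChain j (Fin (n + 1))) (c : Chain (n + 1) X) :
    ofModel (vcobdry M) c = ofModel M (bdry n c) := by
  induction c using Finsupp.induction_linear with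
  | zero => simp
  | add c d hc hd => simp only [map_add, hc, hd]
  | single σ r =>
    simp only [ofModel_single, vcobdry_apply, bdry_apply, face_single, map_sum, map_smul,
      realize_vmap, Finset.smul_sum, smul_comm r]

end Realization

section Symmetrisation

variable {X : Type} [TopologicalSpace X]

lemma bdry_symCh {k : ℕ} (c : Chain (k + 1) X) :
    bdry k (symCh (k + 1) c) = symCh k (bdry k c) := by
  rw [symCh_eq_ofModel, symCh_eq_ofModel, bdry_ofModel, vbdry_symModel, ofModel_vcobdry]

lemma face_symCh {k : ℕ} (j : Fin (k + 2)) (c : Chain (k + 1) X) :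
    face j (symCh (k + 1) c) = (-1 : ℝ) ^ (j : ℕ) • face 0 (symCh (k + 1) c) := by
  rw [symCh_eq_ofModel, face_ofModel, face_ofModel, vface_symModel, ofModel_smul]

lemma face_symCh_eq_zero {k : ℕ} {c : Chain (k + 1) X} (hc : bdry k c = 0) (j : Fin (k + 2)) :
    face j (symCh (k + 1) c) = 0 := by
  have hbdry : bdry k (symCh (k + 1) c) = ((k + 2 : ℕ) : ℝ) • face 0 (symCh (k + 1) c) := by
    have hterm (i : Fin (k + 2)) :
        (-1 : ℝ) ^ (i : ℕ) • face i (symCh (k + 1) c) = face 0 (symCh (k + 1) c) := by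
      rw [face_symCh, neg_one_pow_smul_neg_one_pow_smul]
    rw [bdry_apply, Finset.sum_congr rfl fun i _ => hterm i, Finset.sum_const, Finset.card_univ,
      Fintype.card_fin, Nat.cast_smul_eq_nsmul]
  have hface0 : face 0 (symCh (k + 1) c) = 0 := by
    rw [bdry_symCh, hc, map_zero, eq_comm, smul_eq_zero] at hbdry
    exact hbdry.resolve_left (by positivity)
  rw [face_symCh, hface0, smul_zero]

lemma bdry_ofModel_homotopyModel {k : ℕ} (c : Chain (k + 1) X) :
    bdry (k + 1) (ofModel (homotopyModel (k + 1)) c) =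
      symCh (k + 1) c - c - ofModel (homotopyModel k) (bdry k c) := by
  rw [bdry_ofModel, vbdry_homotopyModel, ofModel_sub, ofModel_sub, ofModel_idModel,
    ofModel_vcobdry, symCh_eq_ofModel]

lemma symCh_sub_mem_bdries {k : ℕ} {c : Chain (k + 1) X} (hc : bdry k c = 0) :
    symCh (k + 1) c - c ∈ bdries X (k + 1) :=
  ⟨ofModel (homotopyModel (k + 1)) c, by rw [bdry_ofModel_homotopyModel, hc, map_zero, sub_zero]⟩

end Symmetrisation

section L1

variable {X : Type} [TopologicalSpace X]

lemma l1_eq_sum_of_support_subset {n : ℕ} {c : Chain n X} {s : Finset (Sing n X)}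
    (hs : c.support ⊆ s) : l1 c = ∑ σ ∈ s, |c σ| :=
  Finset.sum_subset hs fun σ _ hσ => by simp [notMem_support_iff.mp hσ]

lemma l1_add_le {n : ℕ} (a b : Chain n X) : l1 (a + b) ≤ l1 a + l1 b := by
  classical
  rw [l1_eq_sum_of_support_subset support_add,
    l1_eq_sum_of_support_subset (Finset.subset_union_left (s₂ := b.support)),
    l1_eq_sum_of_support_subset (Finset.subset_union_right (s₁ := a.support)),
    ← Finset.sum_add_distrib]
  exact Finset.sum_le_sum fun σ _ => abs_add_le _ _

lemma l1_sum_le {n : ℕ} {ι : Type*} (s : Finset ι) (f : ι → Chain n X) :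
    l1 (∑ i ∈ s, f i) ≤ ∑ i ∈ s, l1 (f i) :=
  Finset.le_sum_of_subadditive l1 (by simp [l1]) l1_add_le s f

lemma l1_smul {n : ℕ} (r : ℝ) (c : Chain n X) : l1 (r • c) = |r| * l1 c := by
  rw [l1_eq_sum_of_support_subset support_smul, l1, Finset.mul_sum]
  simp [abs_mul]

lemma l1_single {n : ℕ} (σ : Sing n X) (r : ℝ) : l1 (single σ r) = |r| := by
  rw [l1_eq_sum_of_support_subset support_single_subset]
  simp

lemma l1_symSimplex_le {n : ℕ} (σ : Sing n X) : l1 (symSimplex σ) ≤ 1 := by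
  have hsum : l1 (∑ π : Equiv.Perm (Fin (n + 1)),
      ((Equiv.Perm.sign π : ℤ) : ℝ) • single (σ.comp (affMap π)) (1 : ℝ)) ≤ (n + 1).factorial :=
    calc _ ≤ ∑ π : Equiv.Perm (Fin (n + 1)),
          l1 (((Equiv.Perm.sign π : ℤ) : ℝ) • single (σ.comp (affMap π)) (1 : ℝ)) := l1_sum_le _ _
      _ = (n + 1).factorial := by
        simp [l1_single, ← Int.cast_abs, Fintype.card_perm]
  rw [symSimplex, l1_smul, abs_of_nonneg (by positivity)]
  calc _ ≤ ((n + 1).factorial : ℝ)⁻¹ * (n + 1).factorial := by gcongr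
    _ = 1 := inv_mul_cancel₀ (by positivity)

lemma l1_symCh_le {n : ℕ} (c : Chain n X) : l1 (symCh n c) ≤ l1 c := by
  rw [symCh_eq_ofModel, ofModel, linearCombination_apply, Finsupp.sum]
  refine (l1_sum_le _ _).trans (Finset.sum_le_sum fun σ _ => ?_)
  rw [l1_smul, realize_symModel]
  exact mul_le_of_le_one_right (abs_nonneg _) (l1_symSimplex_le σ)

end L1

/-- For every cycle `c` there is a normalised cycle `c'` in the same homology class
with `‖c'‖₁ ≤ ‖c‖₁`. -/
theorem exists_normalised_representative (X : Type) [TopologicalSpace X] (n : ℕ)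
    (c : Chain n X) (hc : c ∈ cyc X n) :
    ∃ c' : Chain n X, c' ∈ cyc X n ∧ IsNormalised c' ∧ c' - c ∈ bdries X n ∧ l1 c' ≤ l1 c := by
  cases n with
  | zero => exact ⟨c, hc, trivial, by simp, le_rfl⟩
  | succ k =>
    have hcyc : bdry k c = 0 := hc
    refine ⟨symCh (k + 1) c, ?_, fun j _ => face_symCh_eq_zero hcyc j,
      symCh_sub_mem_bdries hcyc, l1_symCh_le c⟩
    change bdry k (symCh (k + 1) c) = 0
    rw [bdry_symCh, hcyc, map_zero]
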